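/- For every natural number n > 0, there exists a paradoxical group of size n, i.e., a finite set Γ of UC-instances with exactly n elements such that BST ∪ Γ is unsatisfiable while BST ∪ Δ is satisfiable for every proper subset Δ ⊊ Γ. -/

import Mathlib

open FirstOrder FirstOrder.Language

namespace SetParadox

/-- The language with a single binary relation symbol `∈`. -/
def L : Language := ⟨fun _ => Empty, fun n => match n with | 2 => Unit | _ => Empty⟩

/-- The membership relation symbol. -/
def memRel : L.Relations 2 := Unit.unit

/-- `memF t₁ t₂` is the atomic formula `t₁ ∈ t₂`. -/
def memF {n : ℕ} (t₁ t₂ : L.Term (Empty ⊕ Fin n)) : L.BoundedFormula Empty n :=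
  memRel.boundedFormula₂ t₁ t₂

/-- Extensionality: `∀y∀z(∀x(x∈y ↔ x∈z) → y=z)`. -/
def extAx : L.Sentence :=
  ∀' ∀' ((∀' (memF (&2) (&0) ⇔ memF (&2) (&1))) ⟹ ((&0) =' (&1)))

/-- Basic set theory: the theory whose only axiom is extensionality. -/
def BST : L.Theory := {extAx}

/-- The UC-instance `∃y∀x(x∈y ↔ φ(x))` determined by a formula `φ` with one free
variable `x` (so that `y` does not occur free in `φ`). -/
def UCinst (φ : L.BoundedFormula Empty 1) : L.Sentence :=
  ∃' ∀' (memF (&1) (&0) ⇔ φ.liftAt 1 0)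


/-- A sentence is a UC-instance if it has the form `∃y∀x(x∈y ↔ φ(x))`
where `y` does not occur free in `φ`. -/
def IsUCInstance (σ : L.Sentence) : Prop :=
  ∃ φ : L.BoundedFormula Empty 1, σ = UCinst φ

/-!
Curry's paradox: if `y = {x | x ∈ x → ψ}` exists, then `y ∈ y ↔ (y ∈ y → ψ)`, which forces `ψ`;
conversely, in the presence of a universal set this instance holds as soon as `ψ` does.
Let `Γ` consist of these instances for `ψₖ` = "at least `k + 1` elements imply at least `k + 2`"
(`k < n - 1`) and `ψₙ₋₁` = "fewer than `n` elements". The `ψₖ` are jointly unsatisfiable in a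
nonempty model, hence so is `Γ`. Without the `j`-th instance, the chain `Fin (j + 1)` with
`x ∈ y ↔ y ≤ x` is a model: it is extensional, `0` is a universal set, and exactly `ψⱼ` fails
there. The same models show that the `n` instances are distinct.
-/

open Cardinal

variable {M : Type*} [L.Structure M]

def Mem (x y : M) : Prop := Structure.RelMap memRel ![x, y]

@[simp] lemma realize_memF {n : ℕ} (t₁ t₂ : L.Term (Empty ⊕ Fin n)) (v : Empty → M)
    (xs : Fin n → M) :
    (memF t₁ t₂).Realize v xs ↔
      Mem (t₁.realize (Sum.elim v xs)) (t₂.realize (Sum.elim v xs)) := by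
  simp [memF, Mem, BoundedFormula.realize_rel₂]

lemma realize_UCinst (φ : L.BoundedFormula Empty 1) :
    M ⊨ UCinst φ ↔ ∃ y : M, ∀ x : M, Mem x y ↔ φ.Realize default ![x] := by
  simp only [UCinst, Sentence.Realize, Formula.Realize, BoundedFormula.realize_ex,
    BoundedFormula.realize_all, BoundedFormula.realize_iff, realize_memF,
    BoundedFormula.realize_liftAt_one (Nat.zero_le 1)]
  refine exists_congr fun y => forall_congr' fun x => Iff.rfl.iff ?_
  exact iff_of_eq (congrArg _ (funext fun i => by fin_cases i; rfl))

def curryFormula (ψ : L.Sentence) : L.BoundedFormula Empty 1 :=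
  memF (&0) (&0) ⟹ ψ.liftAt 1 0

lemma realize_curryFormula (ψ : L.Sentence) (x : M) :
    (curryFormula ψ).Realize default ![x] ↔ (Mem x x → M ⊨ ψ) := by
  rw [curryFormula, BoundedFormula.realize_imp, realize_memF,
    BoundedFormula.realize_liftAt_one_self]
  exact Iff.rfl.imp (iff_of_eq (congrArg _ (Subsingleton.elim _ _)))

lemma realize_of_realize_UCinst_curryFormula {ψ : L.Sentence}
    (h : M ⊨ UCinst (curryFormula ψ)) : M ⊨ ψ := by
  obtain ⟨y, hy⟩ := (realize_UCinst _).1 h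
  have hyy : Mem y y ↔ (Mem y y → M ⊨ ψ) := (hy y).trans (realize_curryFormula ψ y)
  have hmem : Mem y y := hyy.2 fun h => hyy.1 h h
  exact hyy.1 hmem hmem

lemma realize_UCinst_of_forall {φ : L.BoundedFormula Empty 1} {y : M} (hy : ∀ x, Mem x y)
    (hφ : ∀ x : M, φ.Realize default ![x]) : M ⊨ UCinst φ :=
  (realize_UCinst φ).2 ⟨y, fun x => iff_of_true (hy x) (hφ x)⟩

lemma realize_UCinst_curryFormula {ψ : L.Sentence} {y : M} (hy : ∀ x, Mem x y) :
    M ⊨ UCinst (curryFormula ψ) ↔ M ⊨ ψ :=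
  ⟨realize_of_realize_UCinst_curryFormula, fun h =>
    realize_UCinst_of_forall hy fun x => (realize_curryFormula ψ x).2 fun _ => h⟩

lemma realize_extAx : M ⊨ extAx ↔ ∀ y z : M, (∀ x, Mem x y ↔ Mem x z) → y = z := by
  simp only [extAx, Sentence.Realize, Formula.Realize, BoundedFormula.realize_all,
    BoundedFormula.realize_imp, BoundedFormula.realize_iff, realize_memF,
    BoundedFormula.realize_bdEqual]
  exact Iff.rfl

def cardStep (n k : ℕ) : L.Sentence :=
  if k + 1 < n then Sentence.cardGe L (k + 1) ⟹ Sentence.cardGe L (k + 2)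
  else ∼(Sentence.cardGe L (k + 1))

lemma realize_cardStep (n k : ℕ) :
    M ⊨ cardStep n k ↔ if k + 1 < n then ((k + 1 : ℕ) ≤ #M → (k + 2 : ℕ) ≤ #M)
      else ¬ (k + 1 : ℕ) ≤ #M := by
  unfold cardStep
  split_ifs <;> simp only [Sentence.realize_imp, Sentence.realize_not, Sentence.realize_cardGe]

lemma realize_cardStep_iff_ne {n j : ℕ} (hj : j < n) (hM : #M = (j + 1 : ℕ)) (k : ℕ) :
    M ⊨ cardStep n k ↔ k ≠ j := by
  rw [realize_cardStep, hM]
  split_ifs <;> simp only [Nat.cast_le] <;> omega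

lemma not_forall_realize_cardStep [Nonempty M] {n : ℕ} (hn : 0 < n) :
    ¬ ∀ k < n, M ⊨ cardStep n k := by
  intro h
  have hcard : ∀ k < n, ((k + 1 : ℕ) : Cardinal) ≤ #M := by
    intro k hk
    induction k with
    | zero => simpa using Cardinal.one_le_iff_ne_zero.2 (mk_ne_zero M)
    | succ k ih =>
      have hstep := (realize_cardStep n k).1 (h k (by omega))
      rw [if_pos hk] at hstep
      exact hstep (ih (by omega))
  have hlast := (realize_cardStep n (n - 1)).1 (h (n - 1) (by omega))
  rw [if_neg (by omega)] at hlast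
  exact hlast (hcard (n - 1) (by omega))

/-- An order read as a membership relation: `x ∈ y ↔ y ≤ x`. -/
abbrev orderStructure (α : Type*) [LE α] : L.Structure α where
  funMap f := Empty.elim f
  RelMap {n} r v := match n, r with
    | 2, _ => v 1 ≤ v 0

section Order

attribute [local instance] orderStructure

lemma realize_extAx_orderStructure (α : Type*) [PartialOrder α] : α ⊨ extAx :=
  realize_extAx.2 fun y z h => le_antisymm ((h z).2 le_rfl) ((h y).1 le_rfl)

lemma realize_UCinst_curryFormula_cardStep_fin {n j : ℕ} (hj : j < n) (k : ℕ) :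
    Fin (j + 1) ⊨ UCinst (curryFormula (cardStep n k)) ↔ k ≠ j :=
  (realize_UCinst_curryFormula (y := 0) Fin.zero_le).trans
    (realize_cardStep_iff_ne hj (by rw [mk_fin]) k)

end Order

section CurryGroup

open Classical

noncomputable def curryGroup (n : ℕ) : Finset L.Sentence :=
  (Finset.range n).image fun k => UCinst (curryFormula (cardStep n k))

lemma card_curryGroup (n : ℕ) : (curryGroup n).card = n := by
  rw [curryGroup, Finset.card_image_of_injOn, Finset.card_range]
  intro k hk j _ hkj
  let := orderStructure (Fin (k + 1))
  have h := realize_UCinst_curryFormula_cardStep_fin (n := n) (Finset.mem_range.1 hk)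
  have hkj' : k ≠ k ↔ j ≠ k := (h k).symm.trans ((iff_of_eq (congrArg _ hkj)).trans (h j))
  simpa [eq_comm] using hkj'

lemma isUCInstance_of_mem_curryGroup {n : ℕ} {σ : L.Sentence} (hσ : σ ∈ curryGroup n) :
    IsUCInstance σ := by
  obtain ⟨k, -, rfl⟩ := Finset.mem_image.1 hσ
  exact ⟨_, rfl⟩

lemma not_isSatisfiable_curryGroup {n : ℕ} (hn : 0 < n) :
    ¬ Theory.IsSatisfiable (curryGroup n : L.Theory) := by
  rintro ⟨M⟩
  refine not_forall_realize_cardStep (M := M) hn fun k hk =>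
    realize_of_realize_UCinst_curryFormula ?_
  exact M.is_model.realize_of_mem _ (Finset.mem_image_of_mem _ (Finset.mem_range.2 hk))

lemma isSatisfiable_BST_union_of_ssubset_curryGroup {n : ℕ} {Δ : Finset L.Sentence}
    (hΔ : Δ ⊂ curryGroup n) : (BST ∪ (Δ : Set L.Sentence)).IsSatisfiable := by
  obtain ⟨σ, hσΓ, hσΔ⟩ := Finset.exists_of_ssubset hΔ
  obtain ⟨j, hj, rfl⟩ := Finset.mem_image.1 hσΓ
  let := orderStructure (Fin (j + 1))
  have : Fin (j + 1) ⊨ BST ∪ (Δ : Set L.Sentence) := by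
    refine Theory.model_union_iff.2 ⟨Theory.model_singleton_iff.2 (realize_extAx_orderStructure _),
      (Theory.model_iff _).2 fun τ hτ => ?_⟩
    obtain ⟨k, -, rfl⟩ := Finset.mem_image.1 (hΔ.subset hτ)
    refine (realize_UCinst_curryFormula_cardStep_fin (Finset.mem_range.1 hj) k).2 ?_
    rintro rfl
    exact hσΔ hτ
  exact Theory.Model.isSatisfiable (Fin (j + 1))

end CurryGroup

/-- For every `n > 0` there is a paradoxical group of size `n`: a set `Γ` of exactly `n`
UC-instances such that `BST ∪ Γ` is unsatisfiable while `BST ∪ Δ` is satisfiable for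
every proper subset `Δ ⊊ Γ`. -/
theorem exists_paradoxical_group_of_size (n : ℕ) (hn : 0 < n) :
    ∃ Γ : Finset L.Sentence, Γ.card = n ∧ (∀ σ ∈ Γ, IsUCInstance σ) ∧
      ¬ (BST ∪ (Γ : Set L.Sentence)).IsSatisfiable ∧
      ∀ Δ : Finset L.Sentence, Δ ⊂ Γ → (BST ∪ (Δ : Set L.Sentence)).IsSatisfiable :=
  ⟨curryGroup n, card_curryGroup n, fun _ => isUCInstance_of_mem_curryGroup,
    fun h => not_isSatisfiable_curryGroup hn (h.mono Set.subset_union_right),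
    fun _ => isSatisfiable_BST_union_of_ssubset_curryGroup⟩

end SetParadox
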